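/- Let n ≥ 2, let T be an n×n Markov matrix, and let M be a random n×n matrix distributed as U(M_n) (rows i.i.d. uniform on the simplex Λ_n). Then the matrix product M·T has the same law as M if and only if T is a permutation matrix. -/

import Mathlib

open MeasureTheory ProbabilityTheory

noncomputable section

/-- The standard simplex `Λ_n ⊆ ℝ^n` (Euclidean space). -/
def simplexSet (n : ℕ) : Set (EuclideanSpace ℝ (Fin n)) :=
  {x | (∀ i, 0 ≤ x i) ∧ ∑ i, x i = 1}

/-- The uniform distribution on `Λ_n`: normalized `(n-1)`-dimensional Hausdorff measure. -/
def simplexUniformE (n : ℕ) : Measure (EuclideanSpace ℝ (Fin n)) :=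
  (μH[(n : ℝ) - 1] (simplexSet n))⁻¹ • (μH[(n : ℝ) - 1]).restrict (simplexSet n)

/-- The uniform distribution on `Λ_n`, transported to the plain function space `Fin n → ℝ`. -/
def simplexUniform (n : ℕ) : Measure (Fin n → ℝ) :=
  (simplexUniformE n).map (MeasurableEquiv.toLp 2 (Fin n → ℝ)).symm

/-- `U(M_n)`: the law of a random `n × n` matrix (rows first) with i.i.d. rows uniform on `Λ_n`. -/
def markovUniform (n : ℕ) : Measure (Fin n → Fin n → ℝ) :=
  Measure.pi fun _ : Fin n => simplexUniform n

/-- A matrix (rows first) is Markov: non-negative entries and each row sums to `1`. -/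
def IsMarkovMatrix {n : ℕ} (T : Fin n → Fin n → ℝ) : Prop :=
  (∀ i j, 0 ≤ T i j) ∧ ∀ i, ∑ j, T i j = 1

/-- A permutation matrix: a 0–1 matrix with exactly one `1` in each row and each column. -/
def IsPermutationMatrix {n : ℕ} (T : Fin n → Fin n → ℝ) : Prop :=
  ∃ σ : Equiv.Perm (Fin n), ∀ i j, T i j = if σ i = j then 1 else 0

/-!
Write `ν` for the uniform law on `Λ_n`. The rows of `M` are i.i.d., and `M·T` acts on each row
by `x ↦ x T`, so `M·T` has the law of `M` exactly when `x ↦ x T` preserves `ν`. Since `ν` is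
exchangeable and lives on the simplex, `E[x_k] = 1/n` and `E[x_k x_l] = b + (a - b) δ_kl`, where
`a ≠ b` because `ν` has no atoms. Comparing first moments of `(x T)_j` and `x_j` shows that the
columns of `T` sum to `1`; comparing second moments then gives `∑_k T_kj ^ 2 = 1 = ∑_k T_kj`,
which forces every entry of `T` into `{0, 1}`. Conversely, a permutation matrix only permutes
coordinates, and this preserves `ν`.
-/

open Matrix Finset

lemma Equiv.Perm.permMatrix_apply {ι R : Type*} [DecidableEq ι] [Zero R] [One R]
    (σ : Equiv.Perm ι) (i j : ι) : σ.permMatrix R i j = if σ i = j then 1 else 0 := by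
  simp [PEquiv.toMatrix_apply]

lemma isPermutationMatrix_iff {n : ℕ} {T : Fin n → Fin n → ℝ} :
    IsPermutationMatrix T ↔ ∃ σ : Equiv.Perm (Fin n), T = σ.permMatrix ℝ := by
  refine exists_congr fun σ => ⟨fun h => funext₂ fun i j => ?_, fun h i j => ?_⟩
  · rw [h, σ.permMatrix_apply]
  · rw [h, σ.permMatrix_apply]

lemma eq_zero_or_eq_one_of_sum_sq_eq_sum {α : Type*} {s : Finset α} {f : α → ℝ}
    (h0 : ∀ i ∈ s, 0 ≤ f i) (h1 : ∀ i ∈ s, f i ≤ 1) (h : ∑ i ∈ s, f i ^ 2 = ∑ i ∈ s, f i)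
    {i : α} (hi : i ∈ s) :
    f i = 0 ∨ f i = 1 := by
  have hsum : ∑ i ∈ s, f i * (1 - f i) = 0 := by
    simp only [mul_sub, mul_one, sum_sub_distrib, ← sq, h, sub_self]
  have := (sum_eq_zero_iff_of_nonneg fun i hi => mul_nonneg (h0 i hi)
    (sub_nonneg.2 (h1 i hi))).1 hsum i hi
  rcases mul_eq_zero.1 this with h | h
  · exact Or.inl h
  · exact Or.inr (sub_eq_zero.1 h).symm

section PermutationMatrix

variable {ι : Type*} [Fintype ι] [DecidableEq ι]

lemma exists_eq_permMatrix_of_zero_one {T : Matrix ι ι ℝ} (h01 : ∀ i j, T i j = 0 ∨ T i j = 1)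
    (hrow : ∀ i, ∑ j, T i j = 1) (hcol : ∀ j, ∑ i, T i j = 1) :
    ∃ σ : Equiv.Perm ι, T = σ.permMatrix ℝ := by
  have hT : ∀ i j, T i j = if T i j = 1 then 1 else 0 := fun i j => by
    rcases h01 i j with h | h <;> simp [h]
  have hcard : ∀ i, #{j | T i j = 1} = 1 := fun i => by
    have := hrow i
    rwa [sum_congr rfl fun j _ => hT i j, sum_boole, Nat.cast_eq_one] at this
  choose f hf using fun i => card_eq_one.1 (hcard i)
  have hTf : ∀ i j, T i j = if f i = j then 1 else 0 := fun i j => by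
    have hmem : T i j = 1 ↔ f i = j := by simpa [eq_comm] using Finset.ext_iff.1 (hf i) j
    split_ifs with h
    · exact hmem.2 h
    · exact (h01 i j).resolve_right (mt hmem.1 h)
  have hsurj : Function.Surjective f := fun j => by
    by_contra! h
    simpa [hTf, h] using hcol j
  exact ⟨Equiv.ofBijective f (Finite.surjective_iff_bijective.1 hsurj),
    Matrix.ext fun i j => by rw [hTf, Equiv.Perm.permMatrix_apply]; rfl⟩

lemma exists_eq_permMatrix_of_sum_sq_col_eq_one {T : Matrix ι ι ℝ} (hT0 : ∀ i j, 0 ≤ T i j)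
    (hrow : ∀ i, ∑ j, T i j = 1) (hcol : ∀ j, ∑ i, T i j = 1)
    (hcol_sq : ∀ j, ∑ i, T i j ^ 2 = 1) :
    ∃ σ : Equiv.Perm ι, T = σ.permMatrix ℝ := by
  have hT1 : ∀ i j, T i j ≤ 1 := fun i j =>
    (hrow i).symm ▸ single_le_sum (fun j _ => hT0 i j) (mem_univ j)
  refine exists_eq_permMatrix_of_zero_one (fun i j => ?_) hrow hcol
  exact eq_zero_or_eq_one_of_sum_sq_eq_sum (fun i _ => hT0 i j) (fun i _ => hT1 i j)
    ((hcol_sq j).trans (hcol j).symm) (mem_univ i)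

end PermutationMatrix

lemma integral_comp_of_map_eq {α E : Type*} [MeasurableSpace α] [NormedAddCommGroup E]
    [NormedSpace ℝ E] {μ : Measure α} {g : α → α} (hg : Measurable g) (hμ : μ.map g = μ)
    {f : α → E} (hf : AEStronglyMeasurable f μ) :
    ∫ x, f (g x) ∂μ = ∫ x, f x ∂μ := by
  rw [← integral_map hg.aemeasurable (by rwa [hμ]), hμ]

section Simplex

variable {ι : Type*} [Fintype ι] {ν : Measure (ι → ℝ)}

lemma memLp_of_ae_mem_stdSimplex [IsFiniteMeasure ν] (hsupp : ∀ᵐ x ∂ν, x ∈ stdSimplex ℝ ι)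
    {f : (ι → ℝ) → ℝ} (hf : Continuous f) (p : ENNReal) : MemLp f p ν := by
  obtain ⟨C, hC⟩ := (isCompact_stdSimplex ℝ ι).exists_bound_of_continuousOn hf.continuousOn
  exact .of_bound hf.aestronglyMeasurable C (hsupp.mono hC)

lemma integrable_of_ae_mem_stdSimplex [IsFiniteMeasure ν] (hsupp : ∀ᵐ x ∂ν, x ∈ stdSimplex ℝ ι)
    {f : (ι → ℝ) → ℝ} (hf : Continuous f) : Integrable f ν :=
  (memLp_of_ae_mem_stdSimplex hsupp hf 1).integrable le_rfl

lemma integral_dotProduct_of_ae_mem_stdSimplex [IsFiniteMeasure ν]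
    (hsupp : ∀ᵐ x ∂ν, x ∈ stdSimplex ℝ ι) (v : ι → ℝ) :
    ∫ x, x ⬝ᵥ v ∂ν = ∑ k, (∫ x, x k ∂ν) * v k := by
  simp only [dotProduct]
  rw [integral_finsetSum _ fun k _ => integrable_of_ae_mem_stdSimplex hsupp (by fun_prop)]
  simp only [integral_mul_const]

lemma integral_dotProduct_sq_of_ae_mem_stdSimplex [IsFiniteMeasure ν]
    (hsupp : ∀ᵐ x ∂ν, x ∈ stdSimplex ℝ ι) (v : ι → ℝ) :
    ∫ x, (x ⬝ᵥ v) ^ 2 ∂ν = ∑ k, ∑ l, (∫ x, x k * x l ∂ν) * (v k * v l) := by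
  have hexpand : ∀ x : ι → ℝ, (x ⬝ᵥ v) ^ 2 = ∑ k, ∑ l, x k * x l * (v k * v l) := fun x => by
    rw [sq, dotProduct, sum_mul_sum]
    exact sum_congr rfl fun k _ => sum_congr rfl fun l _ => by ring
  simp only [hexpand]
  rw [integral_finsetSum _ fun k _ => integrable_of_ae_mem_stdSimplex hsupp (by fun_prop)]
  refine sum_congr rfl fun k _ => ?_
  rw [integral_finsetSum _ fun l _ => integrable_of_ae_mem_stdSimplex hsupp (by fun_prop)]
  simp only [integral_mul_const]

end Simplex

def IsExchangeable {ι : Type*} (ν : Measure (ι → ℝ)) : Prop :=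
  ∀ σ : Equiv.Perm ι, ν.map (fun x => x ∘ σ) = ν

namespace IsExchangeable

variable {ι : Type*} {ν : Measure (ι → ℝ)} (hν : IsExchangeable ν)
include hν

lemma integral_comp_perm (σ : Equiv.Perm ι) {f : (ι → ℝ) → ℝ} (hf : Measurable f) :
    ∫ x, f (x ∘ σ) ∂ν = ∫ x, f x ∂ν :=
  integral_comp_of_map_eq (by fun_prop) (hν σ) hf.aestronglyMeasurable

lemma integral_comp_apply_eq [DecidableEq ι] (i j : ι) {f : ℝ → ℝ} (hf : Measurable f) :
    ∫ x, f (x i) ∂ν = ∫ x, f (x j) ∂ν := by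
  simpa using (hν.integral_comp_perm (Equiv.swap i j) (hf.comp (measurable_pi_apply j)))

lemma integral_mul_apply_of_ne {i j k l : ι} (hij : i ≠ j) (hkl : k ≠ l) :
    ∫ x, x i * x j ∂ν = ∫ x, x k * x l ∂ν := by
  obtain ⟨σ, hσk, hσl⟩ :=
    MulAction.is_two_pretransitive_iff.1 (Equiv.Perm.isMultiplyPretransitive ι 2) hkl hij
  rw [← hν.integral_comp_perm σ (f := fun x => x k * x l) (by fun_prop)]
  simp only [Function.comp_apply, ← Equiv.Perm.smul_def, hσk, hσl]

lemma map_vecMul_permMatrix [Fintype ι] [DecidableEq ι] (σ : Equiv.Perm ι) :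
    ν.map (· ᵥ* σ.permMatrix ℝ) = ν := by
  simpa only [vecMul_permMatrix] using hν σ.symm

variable [Fintype ι] [IsProbabilityMeasure ν] (hsupp : ∀ᵐ x ∂ν, x ∈ stdSimplex ℝ ι)
include hsupp

lemma integral_apply_eq_inv_card (i : ι) : ∫ x, x i ∂ν = (Fintype.card ι : ℝ)⁻¹ := by
  classical
  have hsum : ∑ j, ∫ x, x j ∂ν = 1 := by
    rw [← integral_finsetSum _ fun j _ => integrable_of_ae_mem_stdSimplex hsupp (by fun_prop),
      integral_congr_ae (hsupp.mono fun x hx => hx.2)]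
    simp
  rw [sum_congr rfl fun j _ => by simpa using hν.integral_comp_apply_eq j i measurable_id,
    sum_const, card_univ, nsmul_eq_mul] at hsum
  exact eq_inv_of_mul_eq_one_right hsum

lemma integral_dotProduct (v : ι → ℝ) :
    ∫ x, x ⬝ᵥ v ∂ν = (Fintype.card ι : ℝ)⁻¹ * ∑ k, v k := by
  simp only [integral_dotProduct_of_ae_mem_stdSimplex hsupp, hν.integral_apply_eq_inv_card hsupp,
    mul_sum]

lemma integral_dotProduct_sq {i j : ι} (hij : i ≠ j) (v : ι → ℝ) :
    ∫ x, (x ⬝ᵥ v) ^ 2 ∂ν = (∫ x, x i * x j ∂ν) * (∑ k, v k) ^ 2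
      + (∫ x, x i ^ 2 ∂ν - ∫ x, x i * x j ∂ν) * ∑ k, v k ^ 2 := by
  classical
  set a := ∫ x, x i ^ 2 ∂ν
  set b := ∫ x, x i * x j ∂ν
  have hmoment : ∀ k l, ∫ x, x k * x l ∂ν = b + if k = l then a - b else 0 := fun k l => by
    split_ifs with hkl
    · subst hkl
      simp only [add_sub_cancel, ← sq]
      exact hν.integral_comp_apply_eq k i (f := (· ^ 2)) (by fun_prop)
    · rw [hν.integral_mul_apply_of_ne hkl hij, add_zero]
  rw [integral_dotProduct_sq_of_ae_mem_stdSimplex hsupp]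
  simp only [hmoment, add_mul, sum_add_distrib, ite_mul, zero_mul, sum_ite_eq, mem_univ,
    if_true]
  rw [sq, sum_mul_sum, mul_sum]
  simp only [mul_sum, sq]

/-- Were the two equal, to `b` say, then `1 = ∫ (∑ k, x k) ^ 2 = b n ^ 2` would give every
coordinate the variance `b - 1 / n ^ 2 = 0`, making `ν` a point mass at the barycentre. -/
lemma integral_sq_ne_integral_mul [NullSingletonClass ν] {i j : ι} (hij : i ≠ j) :
    ∫ x, x i ^ 2 ∂ν ≠ ∫ x, x i * x j ∂ν := by
  classical
  intro hab
  set c : ℝ := (Fintype.card ι : ℝ)⁻¹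
  have hone : ∫ x, (x ⬝ᵥ 1) ^ 2 ∂ν = 1 := by
    rw [integral_congr_ae (hsupp.mono fun x hx => by rw [dotProduct_one, hx.2])]
    simp
  have hsq : ∫ x, x i ^ 2 ∂ν = c ^ 2 := by
    rw [hν.integral_dotProduct_sq hsupp hij, ← hab, sub_self, zero_mul, add_zero] at hone
    simp only [Pi.one_apply, sum_const, card_univ, nsmul_eq_mul, mul_one] at hone
    rw [inv_pow, eq_inv_of_mul_eq_one_left hone]
  have hconst : ∀ᵐ x ∂ν, ∀ k, x k = c := by
    refine ae_all_iff.2 fun k => ?_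
    have hX : MemLp (fun x : ι → ℝ => x k) 2 ν := memLp_of_ae_mem_stdSimplex hsupp (by fun_prop) 2
    have hvar : variance (fun x : ι → ℝ => x k) ν = 0 := by
      rw [variance_eq_sub hX, hν.integral_apply_eq_inv_card hsupp k]
      simp only [Pi.pow_apply]
      rw [hν.integral_comp_apply_eq k i (f := (· ^ 2)) (by fun_prop), hsq, sub_self]
    simpa only [hν.integral_apply_eq_inv_card hsupp k] using
      ae_eq_integral_of_variance_eq_zero hX hvar
  obtain ⟨x, hx, hxc⟩ := (hconst.and (Measure.ae_ne ν fun _ => c)).exists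
  exact hxc (funext hx)

theorem exists_eq_permMatrix_of_map_vecMul_eq [NullSingletonClass ν] [Nontrivial ι]
    [DecidableEq ι] {T : Matrix ι ι ℝ} (hT0 : ∀ i j, 0 ≤ T i j) (hT1 : ∀ i, ∑ j, T i j = 1)
    (hTν : ν.map (· ᵥ* T) = ν) :
    ∃ σ : Equiv.Perm ι, T = σ.permMatrix ℝ := by
  obtain ⟨i, j, hij⟩ := exists_pair_ne ι
  have hcomp : ∀ {f : (ι → ℝ) → ℝ}, Measurable f → ∫ x, f (x ᵥ* T) ∂ν = ∫ x, f x ∂ν :=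
    fun hf => integral_comp_of_map_eq (by fun_prop) hTν hf.aestronglyMeasurable
  have hcol : ∀ l, ∑ k, T k l = 1 := fun l => by
    have h := hcomp (measurable_pi_apply l)
    simp only [vecMul] at h
    rw [hν.integral_apply_eq_inv_card hsupp, hν.integral_dotProduct hsupp] at h
    exact mul_left_cancel₀ (by positivity) (h.trans (mul_one _).symm)
  have hcol_sq : ∀ l, ∑ k, T k l ^ 2 = 1 := fun l => by
    have h := hcomp ((measurable_pi_apply l).pow_const 2)
    simp only [vecMul] at h
    rw [hν.integral_dotProduct_sq hsupp hij, hcol l, one_pow, mul_one,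
      hν.integral_comp_apply_eq l i (f := (· ^ 2)) (by fun_prop)] at h
    have hab := sub_ne_zero.2 (hν.integral_sq_ne_integral_mul hsupp hij)
    exact mul_left_cancel₀ hab (by linarith)
  exact exists_eq_permMatrix_of_sum_sq_col_eq_one hT0 hT1 hcol hcol_sq

theorem map_vecMul_eq_self_iff [NullSingletonClass ν] [Nontrivial ι] [DecidableEq ι]
    {T : Matrix ι ι ℝ} (hT0 : ∀ i j, 0 ≤ T i j) (hT1 : ∀ i, ∑ j, T i j = 1) :
    ν.map (· ᵥ* T) = ν ↔ ∃ σ : Equiv.Perm ι, T = σ.permMatrix ℝ :=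
  ⟨hν.exists_eq_permMatrix_of_map_vecMul_eq hsupp hT0 hT1,
    fun ⟨σ, hσ⟩ => hσ ▸ hν.map_vecMul_permMatrix σ⟩

end IsExchangeable

lemma comp_perm_mem_stdSimplex_iff {𝕜 ι : Type*} [Fintype ι] [Semiring 𝕜] [PartialOrder 𝕜]
    (σ : Equiv.Perm ι) {x : ι → 𝕜} : x ∘ σ ∈ stdSimplex 𝕜 ι ↔ x ∈ stdSimplex 𝕜 ι := by
  simp only [stdSimplex, Set.mem_ofPred_eq, Function.comp_apply]
  rw [σ.forall_congr_right (q := fun i => 0 ≤ x i), Equiv.sum_comp σ x]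

lemma IsometryEquiv.map_restrict_hausdorffMeasure {X : Type*} [EMetricSpace X]
    [MeasurableSpace X] [BorelSpace X] (Φ : X ≃ᵢ X) (d : ℝ) {S : Set X} (hS : MeasurableSet S)
    (hΦS : Φ ⁻¹' S = S) :
    (μH[d].restrict S).map Φ = μH[d].restrict S := by
  conv_rhs =>
    rw [← Φ.map_hausdorffMeasure d, Measure.restrict_map Φ.continuous.measurable hS, hΦS]

lemma isProbabilityMeasure_of_isProbabilityMeasure_pi {ι α : Type*} [Fintype ι] [Nonempty ι]
    [MeasurableSpace α] {μ : Measure α} [SigmaFinite μ]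
    (h : IsProbabilityMeasure (Measure.pi fun _ : ι => μ)) : IsProbabilityMeasure μ := by
  have hpow := h.measure_univ
  rw [Measure.pi_univ, prod_const, card_univ] at hpow
  exact ⟨le_antisymm ((pow_le_one_iff Fintype.card_ne_zero).1 hpow.le)
    ((one_le_pow_iff Fintype.card_ne_zero).1 hpow.ge)⟩

lemma Measure.pi_const_eq_pi_const_iff {ι α : Type*} [Fintype ι] [Nonempty ι]
    [MeasurableSpace α] {μ ν : Measure α} [IsProbabilityMeasure μ] [IsProbabilityMeasure ν] :
    Measure.pi (fun _ : ι => μ) = Measure.pi (fun _ => ν) ↔ μ = ν := by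
  classical
  refine ⟨fun h => ?_, fun h => h ▸ rfl⟩
  obtain ⟨i⟩ := ‹Nonempty ι›
  simpa [Measure.pi_map_eval] using congrArg (Measure.map (Function.eval i)) h

section SimplexUniform

variable (n : ℕ)

lemma simplexSet_eq_preimage : simplexSet n = WithLp.ofLp ⁻¹' stdSimplex ℝ (Fin n) := rfl

lemma measurableSet_simplexSet : MeasurableSet (simplexSet n) :=
  (isClosed_stdSimplex ℝ (Fin n)).measurableSet.preimage (WithLp.measurable_ofLp 2 _)

lemma simplexUniform_eq_map_ofLp : simplexUniform n = (simplexUniformE n).map WithLp.ofLp := rfl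

instance : IsFiniteMeasure (simplexUniformE n) := by
  refine ⟨?_⟩
  rw [simplexUniformE, Measure.smul_apply, Measure.restrict_apply_univ, smul_eq_mul]
  exact (ENNReal.inv_mul_le_one _).trans_lt ENNReal.one_lt_top

instance : IsFiniteMeasure (simplexUniform n) := by
  rw [simplexUniform_eq_map_ofLp]
  infer_instance

lemma ae_mem_stdSimplex_simplexUniform : ∀ᵐ x ∂simplexUniform n, x ∈ stdSimplex ℝ (Fin n) := by
  rw [simplexUniform_eq_map_ofLp, ae_map_iff (p := (· ∈ stdSimplex ℝ (Fin n)))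
    (WithLp.measurable_ofLp 2 _).aemeasurable (isClosed_stdSimplex ℝ _).measurableSet]
  exact Measure.ae_smul_measure (ae_restrict_mem (measurableSet_simplexSet n)) _

lemma isExchangeable_simplexUniform : IsExchangeable (simplexUniform n) := by
  intro σ
  let Φ := (LinearIsometryEquiv.piLpCongrLeft 2 ℝ ℝ σ.symm).toIsometryEquiv
  have hΦ : ∀ x, (Φ x).ofLp = x.ofLp ∘ σ := fun x => by
    funext j
    simp [Φ, LinearIsometryEquiv.piLpCongrLeft_apply, Equiv.piCongrLeft']
  have hΦS : Φ ⁻¹' simplexSet n = simplexSet n := by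
    ext x
    simp only [simplexSet_eq_preimage, Set.mem_preimage, hΦ, comp_perm_mem_stdSimplex_iff]
  have hE : (simplexUniformE n).map Φ = simplexUniformE n := by
    rw [simplexUniformE, Measure.map_smul,
      Φ.map_restrict_hausdorffMeasure _ (measurableSet_simplexSet n) hΦS]
  rw [simplexUniform_eq_map_ofLp, Measure.map_map (by fun_prop) (WithLp.measurable_ofLp 2 _)]
  conv_rhs => rw [← hE, Measure.map_map (WithLp.measurable_ofLp 2 _) Φ.continuous.measurable]
  rw [show (· ∘ σ) ∘ WithLp.ofLp = WithLp.ofLp ∘ Φ from funext fun x => (hΦ x).symm]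

variable {n}

lemma nullSingletonClass_simplexUniform (hn : 2 ≤ n) : NullSingletonClass (simplexUniform n) := by
  have : NullSingletonClass (μH[(n : ℝ) - 1] : Measure (EuclideanSpace ℝ (Fin n))) :=
    Measure.nullSingletonClass_hausdorff _ (by rify at hn; linarith)
  refine ⟨fun x => ?_⟩
  have hx : WithLp.ofLp ⁻¹' {x} = {WithLp.toLp 2 x} := by
    ext y
    simp [WithLp.ext_iff]
  rw [simplexUniform_eq_map_ofLp, Measure.map_apply (WithLp.measurable_ofLp 2 _)
    (measurableSet_singleton x), hx, simplexUniformE, Measure.smul_apply,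
    Measure.restrict_apply (measurableSet_singleton _),
    measure_mono_null Set.inter_subset_left (measure_singleton _), smul_zero]

end SimplexUniform

/-- if `n ≥ 2`, `T` is an `n × n` Markov matrix and `M ~ U(M_n)`, then the
product `M·T` has the same law as `M` if and only if `T` is a permutation matrix. -/
theorem markovUniform_right_translation_invariant_iff (n : ℕ) (hn : 2 ≤ n)
    (T : Fin n → Fin n → ℝ) (hT : IsMarkovMatrix T)
    {Ω : Type*} [MeasurableSpace Ω] (P : Measure Ω) [IsProbabilityMeasure P]
    (M : Ω → Fin n → Fin n → ℝ) (hM : Measurable M)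
    (hlaw : P.map M = markovUniform n) :
    P.map (fun ω => fun i j => ∑ k, M ω i k * T k j) = P.map M ↔
      IsPermutationMatrix T := by
  have : NeZero n := ⟨by omega⟩
  have : Nontrivial (Fin n) := Fin.nontrivial_iff_two_le.2 hn
  have : IsProbabilityMeasure (markovUniform n) :=
    hlaw ▸ Measure.isProbabilityMeasure_map hM.aemeasurable
  have : IsProbabilityMeasure (simplexUniform n) :=
    isProbabilityMeasure_of_isProbabilityMeasure_pi (ι := Fin n) this
  have := nullSingletonClass_simplexUniform hn
  have hrow : Measurable fun x : Fin n → ℝ => x ᵥ* T := by fun_prop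
  have := Measure.isProbabilityMeasure_map (μ := simplexUniform n) hrow.aemeasurable
  have hrows : (fun ω i j => ∑ k, M ω i k * T k j) = (fun A i => A i ᵥ* T) ∘ M := rfl
  rw [hrows, ← Measure.map_map (by fun_prop) hM, hlaw, markovUniform,
    Measure.pi_map_pi fun _ => hrow.aemeasurable,
    Measure.pi_const_eq_pi_const_iff, isPermutationMatrix_iff]
  exact (isExchangeable_simplexUniform n).map_vecMul_eq_self_iff
    (ae_mem_stdSimplex_simplexUniform n) hT.1 hT.2
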